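/- arXiv:2206.07872 — 2 statements merged into one kernel-verified Lean document; each statement's English description precedes it below -/
import Mathlib

section
/- Every cycle of a minimally 2-connected graph contains at least two vertices of degree two (degree taken in the whole graph). -/
open SimpleGraph

open scoped Classical in
noncomputable def adjMat {V : Type} [Fintype V] (G : SimpleGraph V) : Matrix V V ℝ :=
  Matrix.of fun i j => if G.Adj i j then (1 : ℝ) else 0

noncomputable def specRad {V : Type} [Fintype V] [DecidableEq V] (G : SimpleGraph V) : ℝ :=
  sSup (spectrum ℝ (adjMat G))

def TwoEdgeConnected {V : Type} (G : SimpleGraph V) : Prop :=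
  G.Connected ∧ G.edgeSet.Nonempty ∧ ∀ e ∈ G.edgeSet, (G.deleteEdges {e}).Connected

def MinTwoEdgeConnected {V : Type} (G : SimpleGraph V) : Prop :=
  TwoEdgeConnected G ∧ ∀ e ∈ G.edgeSet, ¬ TwoEdgeConnected (G.deleteEdges {e})

def TwoConnected {V : Type} (G : SimpleGraph V) : Prop :=
  3 ≤ Nat.card V ∧ ∀ v : V, ((⊤ : G.Subgraph).deleteVerts {v}).coe.Connected

def MinTwoConnected {V : Type} (G : SimpleGraph V) : Prop :=
  TwoConnected G ∧ ∀ e ∈ G.edgeSet, ¬ TwoConnected (G.deleteEdges {e})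

def HasChord {V : Type} (G : SimpleGraph V) {v : V} (c : G.Walk v v) : Prop :=
  ∃ a b, G.Adj a b ∧ a ∈ c.support ∧ b ∈ c.support ∧ s(a, b) ∉ c.edges

/-- `K_{2,t}` with one edge subdivided: `Sum.inl 0, Sum.inl 1` are the two vertices of the
small part, `Sum.inl 2` is the subdivision vertex, `Sum.inr i` the large part. -/
def SK2 (t : ℕ) : SimpleGraph (Fin 3 ⊕ Fin t) :=
  SimpleGraph.fromRel (fun x y =>
    (x = Sum.inl 0 ∧ y = Sum.inl 2) ∨
    (∃ i : Fin t, x = Sum.inl 2 ∧ y = Sum.inr i ∧ i.val = 0) ∨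
    (∃ i : Fin t, x = Sum.inl 1 ∧ y = Sum.inr i) ∨
    (∃ i : Fin t, x = Sum.inl 0 ∧ y = Sum.inr i ∧ i.val ≠ 0))

/-- `K_{2,s} * K₃`: `inl 0, inl 1` the small part of `K_{2,s}`, a triangle on
`inl 0, inl 2, inl 3`, and `inr i` the large part. -/
def K2sK3 (t : ℕ) : SimpleGraph (Fin 4 ⊕ Fin t) :=
  SimpleGraph.fromRel (fun x y =>
    (x = Sum.inl 0 ∧ y = Sum.inl 2) ∨ (x = Sum.inl 0 ∧ y = Sum.inl 3) ∨
    (x = Sum.inl 2 ∧ y = Sum.inl 3) ∨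
    (∃ i : Fin t, (x = Sum.inl 0 ∨ x = Sum.inl 1) ∧ y = Sum.inr i))

/-- The friendship graph `F_t`: vertex `0` is the common center, the `i`-th triangle is
`{0, 2i+1, 2i+2}`. -/
def friendship (t : ℕ) : SimpleGraph (Fin (2 * t + 1)) :=
  SimpleGraph.fromRel (fun x y =>
    x = 0 ∨ (∃ i : Fin t, (x : ℕ) = 2 * i + 1 ∧ (y : ℕ) = 2 * i + 2))

/-- Disjoint union of two simple graphs. -/
def disjUnion {α β : Type} (G : SimpleGraph α) (H : SimpleGraph β) : SimpleGraph (α ⊕ β) :=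
  SimpleGraph.fromRel (fun x y =>
    (∃ a b, x = Sum.inl a ∧ y = Sum.inl b ∧ G.Adj a b) ∨
    (∃ a b, x = Sum.inr a ∧ y = Sum.inr b ∧ H.Adj a b))

/-- Identifying `v ∈ H` with `w ∈ K` in the disjoint union of `H` and `K`. -/
def wedge {α β : Type} (H : SimpleGraph α) (K : SimpleGraph β) (v : α) (w : β) :
    SimpleGraph (α ⊕ {b : β // b ≠ w}) :=
  SimpleGraph.fromRel (fun x y =>
    (∃ a b, x = Sum.inl a ∧ y = Sum.inl b ∧ H.Adj a b) ∨
    (∃ a b, x = Sum.inr a ∧ y = Sum.inr b ∧ K.Adj a.1 b.1) ∨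
    (∃ b, x = Sum.inl v ∧ y = Sum.inr b ∧ K.Adj w b.1))

def IsStarCenter {V : Type} (G : SimpleGraph V) (v : V) : Prop :=
  (∀ w, w ≠ v → G.Adj v w) ∧ ∀ a b, G.Adj a b → a = v ∨ b = v

/-!
Let `ab` be an edge of the cycle `C`. As `G - ab` is not 2-connected, some vertex `w` separates `a`
from `b` in `G - ab`; choose it so that the side `A` of `a` (the vertices reachable from `a` in
`G - ab - w`) is inclusion-minimal. Then no vertex of `A` separates `a` from `b`. Let `dw` be the
edge through which the path `C - ab`, followed from `a`, first reaches `w`, so that `d ∈ A`.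
If `d = a` had degree at least 3, `b` and a third neighbour of `a` would give two `a`–`w` routes
through different components of `G - a - w`, and `aw` could be deleted keeping 2-connectivity.
So `d` or `w` has degree 2, or `d ≠ a` and a minimal separator `z` of the cycle edge `dw` lies in
`A` and has its side strictly inside `A`. By induction on the side, `C` has a vertex of degree 2
in `A ∪ {w}`, hence different from `b`. Applying this to any edge of `C` gives a vertex `u` of
degree 2, and applying it to an edge `pu` of `C` gives a second one.
-/

namespace SimpleGraph

variable {V : Type} {G : SimpleGraph V}

def ReachableAvoiding (G : SimpleGraph V) (w x y : V) : Prop :=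
  ∃ p : G.Walk x y, w ∉ p.support

namespace ReachableAvoiding

variable {w x y z : V}

lemma ne_right (h : G.ReachableAvoiding w x y) : y ≠ w := by
  rintro rfl
  obtain ⟨p, hp⟩ := h
  exact hp p.end_mem_support

lemma refl (hx : x ≠ w) : G.ReachableAvoiding w x x :=
  ⟨.nil, by simpa using hx.symm⟩

lemma symm (h : G.ReachableAvoiding w x y) : G.ReachableAvoiding w y x := by
  obtain ⟨p, hp⟩ := h
  exact ⟨p.reverse, by simpa using hp⟩

lemma trans (hxy : G.ReachableAvoiding w x y) (hyz : G.ReachableAvoiding w y z) :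
    G.ReachableAvoiding w x z := by
  obtain ⟨p, hp⟩ := hxy
  obtain ⟨q, hq⟩ := hyz
  exact ⟨p.append q, by simp [Walk.mem_support_append_iff, hp, hq]⟩

lemma of_adj (h : G.Adj x y) (hx : x ≠ w) (hy : y ≠ w) : G.ReachableAvoiding w x y :=
  ⟨h.toWalk, by simp [hx.symm, hy.symm]⟩

end ReachableAvoiding

lemma Walk.reachableAvoiding_of_mem_support [DecidableEq V] {x y w t : V}
    (p : G.Walk x y) (hp : w ∉ p.support) (ht : t ∈ p.support) : G.ReachableAvoiding w x t :=
  ⟨p.takeUntil t ht, fun h => hp (p.support_takeUntil_subset_support ht h)⟩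

lemma Walk.toSubgraph_le_deleteVerts_top_iff {x y : V}
    (p : G.Walk x y) (w : V) :
    p.toSubgraph ≤ (⊤ : G.Subgraph).deleteVerts {w} ↔ w ∉ p.support := by
  refine ⟨fun h hw => by simpa using h.1 (p.mem_verts_toSubgraph.2 hw), fun h => ⟨?_, ?_⟩⟩
  · intro t ht
    simp only [Subgraph.deleteVerts_verts, Subgraph.verts_top, Set.mem_sdiff, Set.mem_univ,
      Set.mem_singleton_iff, true_and]
    rintro rfl
    exact h (p.mem_verts_toSubgraph.1 ht)
  · intro s t hst
    simp only [Subgraph.deleteVerts_adj, Subgraph.verts_top, Set.mem_univ, Set.mem_singleton_iff,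
      Subgraph.top_adj, true_and]
    refine ⟨?_, ?_, hst.adj_sub⟩ <;> rintro rfl
    exacts [h (Walk.mem_support_of_adj_toSubgraph hst),
      h (Walk.mem_support_of_adj_toSubgraph hst.symm)]

lemma twoConnected_iff :
    TwoConnected G ↔
      3 ≤ Nat.card V ∧ ∀ w x y : V, x ≠ w → y ≠ w → G.ReachableAvoiding w x y := by
  simp only [TwoConnected, ← Subgraph.connected_iff',
    Subgraph.connected_iff_forall_exists_walk_subgraph, Walk.toSubgraph_le_deleteVerts_top_iff]
  refine and_congr_right fun hcard => forall_congr' fun w => ?_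
  simp only [Subgraph.deleteVerts_verts, Subgraph.verts_top, Set.mem_sdiff, Set.mem_univ,
    Set.mem_singleton_iff, true_and]
  refine ⟨fun h x y hx hy => h.2 hx hy, fun h => ⟨?_, fun hx hy => h _ _ hx hy⟩⟩
  have : Finite V := Nat.finite_of_card_ne_zero (by omega)
  have : Nontrivial V := Finite.one_lt_card_iff_nontrivial.mp (by omega)
  obtain ⟨x, hx⟩ := exists_ne w
  exact ⟨x, by simpa using hx⟩

lemma Walk.reachableAvoiding_deleteEdges {K : SimpleGraph V} (hK : K ≤ G) {x y a z : V}
    {e : Sym2 V} (p : K.Walk x y) (ha : a ∈ e) (hpa : a ∉ p.support) (hpz : z ∉ p.support) :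
    (G.deleteEdges {e}).ReachableAvoiding z x y := by
  refine ⟨(p.mapLe hK).toDeleteEdge e fun he => hpa ?_, by simpa using hpz⟩
  simpa using Walk.mem_support_iff_exists_mem_edges.2 (Or.inr ⟨e, he, ha⟩)

lemma ReachableAvoiding.deleteEdges_of_mem {u x y : V} {e : Sym2 V}
    (h : G.ReachableAvoiding u x y) (hu : u ∈ e) : (G.deleteEdges {e}).ReachableAvoiding u x y :=
  let ⟨p, hp⟩ := h
  p.reachableAvoiding_deleteEdges le_rfl hu hp hp

lemma ReachableAvoiding.deleteEdges {a b w x y : V}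
    (hab : (G.deleteEdges {s(a, b)}).ReachableAvoiding w a b) (h : G.ReachableAvoiding w x y) :
    (G.deleteEdges {s(a, b)}).ReachableAvoiding w x y := by
  obtain ⟨p, hp⟩ := h
  induction p with
  | nil => exact .refl (by simpa [eq_comm] using hp)
  | @cons u u' y huu' q ih =>
    simp only [Walk.support_cons, List.mem_cons, not_or] at hp
    refine .trans ?_ (ih hp.2)
    by_cases he : s(u, u') = s(a, b)
    · rcases Sym2.eq_iff.1 he with ⟨rfl, rfl⟩ | ⟨rfl, rfl⟩
      exacts [hab, hab.symm]
    · exact .of_adj (by simp [huu', he]) (Ne.symm hp.1) fun h => hp.2 (h ▸ q.start_mem_support)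

lemma Walk.exists_mem_edges_walk_avoiding {x y w : V} (p : G.Walk x y) (hw : w ∈ p.support)
    (hx : x ≠ w) :
    ∃ d, s(d, w) ∈ p.edges ∧ ∃ q : G.Walk x d, w ∉ q.support ∧ q.support ⊆ p.support := by
  induction p with
  | nil => exact absurd (by simpa using hw) hx.symm
  | @cons x x' y h p ih =>
    by_cases hx' : x' = w
    · subst hx'
      exact ⟨x, by simp, .nil, by simpa using hx.symm, by simp⟩
    · have hwp : w ∈ p.support := by simpa [hx.symm] using hw
      obtain ⟨d, hd, q, hqw, hqp⟩ := ih hwp hx'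
      refine ⟨d, by simp [hd], .cons h q, by simp [hx.symm, hqw], ?_⟩
      simpa using List.cons_subset_cons x hqp

lemma Walk.IsCycle.exists_walk_deleteEdges [DecidableEq V] {v a b : V} {c : G.Walk v v}
    (hc : c.IsCycle) (he : s(a, b) ∈ c.edges) :
    ∃ p : (G.deleteEdges {s(a, b)}).Walk a b, p.edges ⊆ c.edges := by
  have ha := c.fst_mem_support_of_mem_edges he
  have hrot : ∀ {e}, e ∈ (c.rotate a ha).edges ↔ e ∈ c.edges := (c.rotate_edges a ha).mem_iff
  have hb : b ∈ (c.rotate a ha).support := Walk.snd_mem_support_of_mem_edges _ (hrot.2 he)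
  have hdisj := (hc.rotate ha).isTrail.disjoint_edges_takeUntil_dropUntil hb
  by_cases h : s(a, b) ∈ ((c.rotate a ha).takeUntil b hb).edges
  · refine ⟨((c.rotate a ha).dropUntil b hb).reverse.toDeleteEdge _ ?_, fun e he' => ?_⟩
    · simpa using fun h' => hdisj h h'
    · simp only [Walk.edges_transfer, Walk.edges_reverse, List.mem_reverse] at he'
      exact hrot.1 (Walk.edges_dropUntil_subset_edges _ _ he')
  · refine ⟨((c.rotate a ha).takeUntil b hb).toDeleteEdge _ h, fun e he' => ?_⟩
    simp only [Walk.edges_transfer] at he'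
    exact hrot.1 (Walk.edges_takeUntil_subset_edges _ _ he')

lemma Walk.exists_mem_edges_of_mem_support {x y u : V} {p : G.Walk x y} (hp : ¬ p.Nil)
    (hu : u ∈ p.support) : ∃ t, s(t, u) ∈ p.edges := by
  obtain ⟨e, he, hue⟩ := (Walk.mem_support_iff_exists_mem_edges_of_not_nil hp).1 hu
  obtain ⟨t, rfl⟩ := Sym2.mem_iff_exists.1 hue
  exact ⟨t, Sym2.eq_swap ▸ he⟩

lemma exists_adj_ne_ne_of_degree_ne_two {a b c : V} [Fintype (G.neighborSet a)]
    (hb : G.Adj a b) (hc : G.Adj a c) (hbc : b ≠ c) (h : G.degree a ≠ 2) :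
    ∃ t, G.Adj a t ∧ t ≠ b ∧ t ≠ c := by
  by_contra! hno
  classical
  have : G.neighborFinset a = {b, c} := by
    ext t
    simp only [mem_neighborFinset, Finset.mem_insert, Finset.mem_singleton]
    refine ⟨fun ht => ?_, by rintro (rfl | rfl) <;> assumption⟩
    by_contra! htbc
    exact htbc.2 (hno t ht htbc.1)
  rw [← card_neighborFinset_eq_degree, this, Finset.card_pair hbc] at h
  exact h rfl

variable {a b w : V}

def SeparatesEdge (G : SimpleGraph V) (a b w : V) : Prop :=
  w ≠ a ∧ w ≠ b ∧ ¬ (G.deleteEdges {s(a, b)}).ReachableAvoiding w a b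

def side (G : SimpleGraph V) (a b w : V) : Set V :=
  {t | (G.deleteEdges {s(a, b)}).ReachableAvoiding w a t}

lemma notMem_side_self : w ∉ G.side a b w := fun h => h.ne_right rfl

lemma exists_separatesEdge (hG : MinTwoConnected G) (hab : G.Adj a b) :
    ∃ w, G.SeparatesEdge a b w := by
  have hG2 := twoConnected_iff.1 hG.1
  obtain ⟨w, x, y, hx, hy, hxy⟩ : ∃ w x y, x ≠ w ∧ y ≠ w ∧
      ¬ (G.deleteEdges {s(a, b)}).ReachableAvoiding w x y := by
    simpa [twoConnected_iff, hG2.1] using hG.2 _ (G.mem_edgeSet.2 hab)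
  have hxy' := hG2.2 w x y hx hy
  refine ⟨w, ?_, ?_, fun hab' => hxy (hab'.deleteEdges hxy')⟩ <;> rintro rfl
  exacts [hxy (hxy'.deleteEdges_of_mem (Sym2.mem_mk_left _ _)),
    hxy (hxy'.deleteEdges_of_mem (Sym2.mem_mk_right _ _))]

namespace SeparatesEdge

lemma left_mem_side (hw : G.SeparatesEdge a b w) : a ∈ G.side a b w := .refl hw.1.symm

lemma right_notMem_side (hw : G.SeparatesEdge a b w) : b ∉ G.side a b w := hw.2.2

lemma notMem_side_of_reachableAvoiding (hw : G.SeparatesEdge a b w) {t : V}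
    (ht : (G.deleteEdges {s(a, b)}).ReachableAvoiding w b t) : t ∉ G.side a b w :=
  fun h => hw.2.2 (h.trans ht.symm)

lemma exists_walk_notMem_side (hG : TwoConnected G) (hw : G.SeparatesEdge a b w) :
    ∃ p : (G.deleteEdges {s(a, b)}).Walk b w, ∀ v ∈ p.support, v ∉ G.side a b w := by
  classical
  have hba : b ≠ a := by
    rintro rfl
    exact hw.2.2 (.refl hw.1.symm)
  obtain ⟨r, hr⟩ := ((twoConnected_iff.1 hG).2 a b w hba hw.1).deleteEdges_of_mem
    (Sym2.mem_mk_left a b)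
  obtain ⟨d, hd, q, hqw, -⟩ := r.exists_mem_edges_walk_avoiding r.end_mem_support hw.2.1.symm
  refine ⟨q.concat (r.adj_of_mem_edges hd), fun v hv => ?_⟩
  rw [Walk.support_concat, List.mem_append, List.mem_singleton] at hv
  rcases hv with hv | rfl
  · exact hw.notMem_side_of_reachableAvoiding (q.reachableAvoiding_of_mem_support hqw hv)
  · exact notMem_side_self

lemma side_ssubset_of_mem_side (hG : TwoConnected G) (hw : G.SeparatesEdge a b w) {v : V}
    (hv : G.SeparatesEdge a b v) (hvw : v ∈ G.side a b w) : G.side a b v ⊂ G.side a b w := by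
  classical
  refine Set.ssubset_iff_subset_ne.2 ⟨fun t ⟨p, hp⟩ => ?_, fun h => notMem_side_self (h ▸ hvw)⟩
  by_cases hwp : w ∈ p.support
  · obtain ⟨r, hr⟩ := hw.exists_walk_notMem_side hG
    exact absurd ((p.reachableAvoiding_of_mem_support hp hwp).trans
      ⟨r.reverse, by simpa using fun h => hr v h hvw⟩) hv.2.2
  · exact ⟨p, hwp⟩

lemma not_adj (hG : MinTwoConnected G) (hab : G.Adj a b) (hw : G.SeparatesEdge a b w) {t : V}
    (hat : G.Adj a t) (htb : t ≠ b) (htw : t ≠ w) : ¬ G.Adj a w := by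
  classical
  intro haw
  obtain ⟨z, hza, hzw, hz⟩ := exists_separatesEdge hG haw
  -- `b` and `t` are in different components of `G - a - w`, so one of them cannot reach `z` there.
  obtain ⟨s, has, hsw, hs⟩ : ∃ s, G.Adj a s ∧ s ≠ w ∧
      ∀ q : G.Walk s z, a ∈ q.support ∨ w ∈ q.support := by
    by_contra! h
    obtain ⟨qb, hqba, hqbw⟩ := h b hab hw.2.1.symm
    obtain ⟨qt, hqta, hqtw⟩ := h t hat htw
    have htb' : (G.deleteEdges {s(a, b)}).ReachableAvoiding w t b :=
      (qt.append qb.reverse).reachableAvoiding_deleteEdges le_rfl (Sym2.mem_mk_left a b)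
        (by simp [Walk.mem_support_append_iff, hqta, hqba])
        (by simp [Walk.mem_support_append_iff, hqtw, hqbw])
    exact hw.2.2 ((ReachableAvoiding.of_adj (by simp [hat, htb, hat.ne']) hw.1.symm htw).trans
      htb')
  obtain ⟨p, hp⟩ := (twoConnected_iff.1 hG.1).2 a s w has.ne' hw.1
  obtain ⟨d, hd, q, hqw, hqp⟩ := p.exists_mem_edges_walk_avoiding p.end_mem_support hsw
  have hqa : a ∉ q.support := fun h => hp (hqp h)
  have hqz : z ∉ q.support := fun h =>
    (hs (q.takeUntil z h)).elim (fun h' => hqa (q.support_takeUntil_subset_support h h'))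
      (fun h' => hqw (q.support_takeUntil_subset_support h h'))
  have hda : d ≠ a := fun h => hqa (h ▸ q.end_mem_support)
  refine hz ((ReachableAvoiding.of_adj ?_ hza.symm fun h => hqz (h ▸ q.start_mem_support)).trans
    ((q.reachableAvoiding_deleteEdges le_rfl (Sym2.mem_mk_left a w) hqa hqz).trans
      (.of_adj ?_ (fun h => hqz (h ▸ q.end_mem_support)) hzw.symm)))
  · simp [has, hsw, has.ne']
  · simp [p.adj_of_mem_edges hd, hda, hw.1]

lemma reachableAvoiding_of_mem_side (hG : TwoConnected G) (hw : G.SeparatesEdge a b w)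
    (hmin : ∀ v ∈ G.side a b w, ¬ G.SeparatesEdge a b v) {u x y : V} (hu : u ∈ G.side a b w)
    (hx : x ≠ u) (hy : y ≠ u) : (G.deleteEdges {s(a, b)}).ReachableAvoiding u x y := by
  have hxy := (twoConnected_iff.1 hG).2 u x y hx hy
  by_cases hua : u = a
  · subst hua
    exact hxy.deleteEdges_of_mem (Sym2.mem_mk_left _ _)
  · have hub : u ≠ b := fun h => hw.right_notMem_side (h ▸ hu)
    have hab : (G.deleteEdges {s(a, b)}).ReachableAvoiding u a b := by
      by_contra h
      exact hmin u hu ⟨hua, hub, h⟩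
    exact hab.deleteEdges hxy

variable {d z : V}

lemma mem_side_of_separatesEdge (hG : TwoConnected G) (hw : G.SeparatesEdge a b w)
    (hmin : ∀ v ∈ G.side a b w, ¬ G.SeparatesEdge a b v) (hd : d ∈ G.side a b w) (hda : d ≠ a)
    (hz : G.SeparatesEdge d w z) : z ∈ G.side a b w := by
  classical
  by_contra hzA
  obtain ⟨p, hp⟩ := hw.reachableAvoiding_of_mem_side hG hmin hd hda.symm hd.ne_right.symm
  obtain ⟨d', hd', q, hqw, hqp⟩ := p.exists_mem_edges_walk_avoiding p.end_mem_support hw.1.symm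
  -- the route `d ⇝ a ⇝ d' → w` stays in `A ∪ {w}` and does not use the edge `dw`
  obtain ⟨r, hr⟩ := id hd
  set W := r.reverse.append q
  have hWw : w ∉ W.support := by simp [W, Walk.mem_support_append_iff, hr, hqw]
  have hWz : z ∉ W.support := fun h =>
    hzA (hd.trans (W.reachableAvoiding_of_mem_support hWw h))
  have hd'd : d' ≠ d := fun h => hp (hqp (h ▸ q.end_mem_support))
  refine hz.2.2 ((W.reachableAvoiding_deleteEdges (deleteEdges_le _) (Sym2.mem_mk_right d w)
    hWw hWz).trans (.of_adj ?_ (fun h => hWz (h ▸ W.end_mem_support)) hz.2.1.symm))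
  simpa [hd'd, hd.ne_right.symm] using (p.adj_of_mem_edges hd').1

lemma left_notMem_side_of_separatesEdge (hG : TwoConnected G) (hab : G.Adj a b)
    (hw : G.SeparatesEdge a b w) (hmin : ∀ v ∈ G.side a b w, ¬ G.SeparatesEdge a b v)
    (hd : d ∈ G.side a b w) (hda : d ≠ a) (hz : G.SeparatesEdge d w z) : a ∉ G.side d w z := by
  -- otherwise `d ⇝ a → b ⇝ w` would avoid `z`, the last part running outside `A`
  intro ha
  have hzA := hw.mem_side_of_separatesEdge hG hmin hd hda hz
  obtain ⟨p, hp⟩ := hw.exists_walk_notMem_side hG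
  have hbw : (G.deleteEdges {s(d, w)}).ReachableAvoiding z b w :=
    p.reachableAvoiding_deleteEdges (deleteEdges_le _) (Sym2.mem_mk_left d w)
      (fun h => hp d h hd) (fun h => hp z h hzA)
  refine hz.2.2 (ha.trans ((ReachableAvoiding.of_adj ?_ ha.ne_right
    fun h : b = z => hw.right_notMem_side (h ▸ hzA)).trans hbw))
  simp [hab, hda.symm, hw.1.symm]

lemma side_ssubset_of_separatesEdge (hG : TwoConnected G) (hab : G.Adj a b)
    (hw : G.SeparatesEdge a b w) (hmin : ∀ v ∈ G.side a b w, ¬ G.SeparatesEdge a b v)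
    (hd : d ∈ G.side a b w) (hda : d ≠ a) (hz : G.SeparatesEdge d w z) :
    G.side d w z ⊂ G.side a b w := by
  classical
  have ha := hw.left_notMem_side_of_separatesEdge hG hab hmin hd hda hz
  refine (Set.ssubset_iff_of_subset ?_).2 ⟨a, hw.left_mem_side, ha⟩
  rintro t ⟨β, hβ⟩
  have hwβ : w ∉ β.support := fun h => hz.2.2 (β.reachableAvoiding_of_mem_support hβ h)
  have haβ : a ∉ β.support := fun h => ha (β.reachableAvoiding_of_mem_support hβ h)
  exact hd.trans
    (β.reachableAvoiding_deleteEdges (deleteEdges_le _) (Sym2.mem_mk_left a b) haβ hwβ)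

end SeparatesEdge

lemma exists_separatesEdge_minimal [Finite V] (hG : MinTwoConnected G) (hab : G.Adj a b) :
    ∃ w, G.SeparatesEdge a b w ∧ ∀ v ∈ G.side a b w, ¬ G.SeparatesEdge a b v := by
  obtain ⟨w, hw, hmin⟩ := exists_minimalFor_of_wellFoundedLT (G.SeparatesEdge a b) (G.side a b)
    (exists_separatesEdge hG hab)
  refine ⟨w, hw, fun v hv hsep => ?_⟩
  have hlt := hw.side_ssubset_of_mem_side hG.1 hsep hv
  exact hlt.not_subset (hmin hsep hlt.subset)

lemma Walk.IsCycle.exists_mem_side_mem_edges {v : V} {c : G.Walk v v} (hc : c.IsCycle)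
    (hab : s(a, b) ∈ c.edges) (hw : G.SeparatesEdge a b w) :
    ∃ d ∈ G.side a b w, s(d, w) ∈ c.edges := by
  classical
  obtain ⟨π, hπ⟩ := hc.exists_walk_deleteEdges hab
  have hwπ : w ∈ π.support := by
    by_contra h
    exact hw.2.2 ⟨π, h⟩
  obtain ⟨d, hdπ, q, hqw, -⟩ := π.exists_mem_edges_walk_avoiding hwπ hw.1.symm
  exact ⟨d, ⟨q, hqw⟩, hπ hdπ⟩

theorem Walk.IsCycle.exists_degree_eq_two_mem_side [Fintype V] [DecidableRel G.Adj]
    (hG : MinTwoConnected G) {v : V} {c : G.Walk v v} (hc : c.IsCycle)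
    (hab : s(a, b) ∈ c.edges) (hw : G.SeparatesEdge a b w)
    (hmin : ∀ u ∈ G.side a b w, ¬ G.SeparatesEdge a b u) :
    ∃ u ∈ c.support, G.degree u = 2 ∧ u ∈ insert w (G.side a b w) := by
  suffices ∀ A : Set V, ∀ a b w, G.side a b w = A → s(a, b) ∈ c.edges → G.SeparatesEdge a b w →
      (∀ u ∈ G.side a b w, ¬ G.SeparatesEdge a b u) →
      ∃ u ∈ c.support, G.degree u = 2 ∧ u ∈ insert w (G.side a b w) from
    this _ a b w rfl hab hw hmin
  intro A
  induction A using WellFoundedLT.induction with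
  | _ A ih =>
  rintro a b w rfl hab hw hmin
  obtain ⟨d, hdA, hdw⟩ := hc.exists_mem_side_mem_edges hab hw
  by_cases hd2 : G.degree d = 2
  · exact ⟨d, c.fst_mem_support_of_mem_edges hdw, hd2, Set.mem_insert_of_mem _ hdA⟩
  by_cases hw2 : G.degree w = 2
  · exact ⟨w, c.snd_mem_support_of_mem_edges hdw, hw2, Set.mem_insert _ _⟩
  have hadj := c.adj_of_mem_edges hab
  have hda : d ≠ a := by
    rintro rfl
    obtain ⟨t, hat, htb, htw⟩ :=
      exists_adj_ne_ne_of_degree_ne_two hadj (c.adj_of_mem_edges hdw) hw.2.1.symm hd2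
    exact hw.not_adj hG hadj hat htb htw (c.adj_of_mem_edges hdw)
  obtain ⟨z, hz, hzmin⟩ := exists_separatesEdge_minimal hG (c.adj_of_mem_edges hdw)
  have hlt := hw.side_ssubset_of_separatesEdge hG.1 hadj hmin hdA hda hz
  obtain ⟨u, huc, hu2, hu⟩ := ih _ hlt d w z rfl hdw hz hzmin
  refine ⟨u, huc, hu2, Set.mem_insert_of_mem _ ?_⟩
  rcases hu with rfl | hu
  · exact hw.mem_side_of_separatesEdge hG.1 hmin hdA hda hz
  · exact hlt.subset hu

end SimpleGraph

theorem stmt5 {V : Type} [Fintype V] (G : SimpleGraph V) [DecidableRel G.Adj]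
    (hG : MinTwoConnected G) {v : V} (c : G.Walk v v) (hc : c.IsCycle) :
    ∃ a b, a ≠ b ∧ a ∈ c.support ∧ b ∈ c.support ∧ G.degree a = 2 ∧ G.degree b = 2 := by
  obtain ⟨x, hxv⟩ := Walk.exists_mem_edges_of_mem_support hc.not_nil c.start_mem_support
  obtain ⟨w₁, hw₁, hmin₁⟩ := exists_separatesEdge_minimal hG (c.adj_of_mem_edges hxv)
  obtain ⟨u, huc, hu2, -⟩ := hc.exists_degree_eq_two_mem_side hG hxv hw₁ hmin₁
  obtain ⟨p, hp⟩ := Walk.exists_mem_edges_of_mem_support hc.not_nil huc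
  obtain ⟨w₂, hw₂, hmin₂⟩ := exists_separatesEdge_minimal hG (c.adj_of_mem_edges hp)
  obtain ⟨u', hu'c, hu'2, hu'⟩ := hc.exists_degree_eq_two_mem_side hG hp hw₂ hmin₂
  refine ⟨u, u', ?_, huc, hu'c, hu2, hu'2⟩
  rintro rfl
  rcases hu' with h | h
  · exact hw₂.2.1 h.symm
  · exact hw₂.right_notMem_side h
end

section
/- Let G* attain the maximum spectral radius among all minimally 2-edge-connected graphs with m ≥ 6 edges. Then ρ(G*) > √(m-2). -/
open SimpleGraph

/-!
An extremal graph `G*` has spectral radius at least that of any competitor, so it suffices to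
exhibit, for every `m ≥ 6`, one minimally 2-edge-connected graph with `m` edges whose spectral
radius exceeds `√(m - 2)`: `K_{2,t}` for `m = 2t` and the subdivided `SK_{2,t}` for `m = 2t + 1`.
The spectral bounds come from a Collatz–Wielandt type test: a nonnegative vector `x` with
`r • x ≤ A x`, strictly somewhere on the support of `x`, has Rayleigh quotient `> r`.
Both graphs are 2-edge-connected because every vertex lies on a closed trail through a base
vertex, and minimally so because every edge has an endpoint of degree two, which becomes a pendant
vertex once the edge is deleted.
-/

open Matrix

theorem Matrix.IsHermitian.dotProduct_mulVec_le_sSup_spectrum {n : Type*} [Fintype n]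
    [DecidableEq n] {A : Matrix n n ℝ} (hA : A.IsHermitian) (x : n → ℝ) :
    x ⬝ᵥ A *ᵥ x ≤ sSup (spectrum ℝ A) * (x ⬝ᵥ x) := by
  set μ := sSup (spectrum ℝ A)
  have hBh : (algebraMap ℝ (Matrix n n ℝ) μ - A).IsHermitian :=
    (isHermitian_diagonal _).sub hA
  have hB : (algebraMap ℝ (Matrix n n ℝ) μ - A).PosSemidef := by
    rw [hBh.posSemidef_iff_eigenvalues_nonneg]
    intro i
    obtain ⟨_, rfl, s, hs, hi⟩ := (spectrum.singleton_sub_eq A μ).symm ▸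
      hBh.eigenvalues_mem_spectrum_real i
    rw [Pi.zero_apply, ← hi, sub_nonneg]
    exact le_csSup A.finite_real_spectrum.bddAbove hs
  simpa [sub_mulVec, dotProduct_sub, Algebra.algebraMap_eq_smul_one, smul_mulVec]
    using hB.dotProduct_mulVec_nonneg x

lemma adjMat_isHermitian {V : Type} [Fintype V] (G : SimpleGraph V) :
    (adjMat G).IsHermitian := by
  classical
  ext i j
  simp only [adjMat, conjTranspose_apply, of_apply, star_trivial]
  exact if_congr (G.adj_comm j i) rfl rfl

open scoped Classical in
lemma adjMat_mulVec_apply {V : Type} [Fintype V] (G : SimpleGraph V) (x : V → ℝ) (v : V) :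
    (adjMat G *ᵥ x) v = ∑ u, if G.Adj v u then x u else 0 := by
  simp [adjMat, mulVec, dotProduct]

lemma lt_specRad_of_le_mulVec {V : Type} [Fintype V] [DecidableEq V] (G : SimpleGraph V)
    {r : ℝ} {x : V → ℝ} (hx : 0 ≤ x) (hle : ∀ v, r * x v ≤ (adjMat G *ᵥ x) v)
    (hlt : ∃ v, 0 < x v ∧ r * x v < (adjMat G *ᵥ x) v) : r < specRad G := by
  obtain ⟨v, hxv, hv⟩ := hlt
  have hxx : 0 < x ⬝ᵥ x :=
    (mul_pos hxv hxv).trans_le (Finset.single_le_sum (f := fun u => x u * x u)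
      (fun u _ => mul_self_nonneg (x u)) (Finset.mem_univ v))
  have hquad : r * (x ⬝ᵥ x) < x ⬝ᵥ adjMat G *ᵥ x := by
    simp only [dotProduct, Finset.mul_sum]
    refine Finset.sum_lt_sum (fun u _ => ?_) ⟨v, Finset.mem_univ v, ?_⟩
    · nlinarith [mul_le_mul_of_nonneg_left (hle u) (hx u)]
    · nlinarith [mul_lt_mul_of_pos_left hv hxv]
  exact lt_of_mul_lt_mul_right
    (hquad.trans_le ((adjMat_isHermitian G).dotProduct_mulVec_le_sSup_spectrum x)) hxx.le

section EdgeConnectivity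
variable {V : Type} {G : SimpleGraph V}

lemma SimpleGraph.isEdgeConnected_two_of_forall_exists_closed_trail (r : V)
    (h : ∀ x, ∃ c : G.Walk r r, c.IsTrail ∧ x ∈ c.support) : G.IsEdgeConnected 2 := by
  have hr : ∀ x, G.IsEdgeReachable 2 x r := fun x => by
    obtain ⟨c, hc, hx⟩ := h x
    exact hc.isEdgeReachable_two_of_isEdgeReachable_two .rfl hx c.start_mem_support
  exact fun x y => (hr x).trans (hr y).symm

lemma TwoEdgeConnected.of_isEdgeConnected_two [Nonempty V] (hE : G.edgeSet.Nonempty)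
    (h : G.IsEdgeConnected 2) : TwoEdgeConnected G :=
  ⟨h.connected two_ne_zero, hE, fun e _ => ⟨isEdgeConnected_two.mp h e⟩⟩

lemma not_twoEdgeConnected_deleteEdges_of_neighborSet_subset {a b c d : V} (hab : G.Adj a b)
    (h : G.neighborSet a ⊆ {c, d}) : ¬ TwoEdgeConnected (G.deleteEdges {s(a, b)}) := by
  rintro ⟨hconn, -, hdel⟩
  have : Nontrivial V := ⟨a, b, hab.ne⟩
  have hb : b ∈ ({c, d} : Set V) := h hab
  obtain ⟨y, hy⟩ := hconn.preconnected.exists_adj_of_nontrivial a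
  obtain ⟨y', hy'⟩ := (hdel s(a, y) hy).preconnected.exists_adj_of_nontrivial a
  simp only [deleteEdges_adj, Set.mem_singleton_iff] at hy hy'
  have hy_mem := h hy.1
  have hy'_mem := h hy'.1.1
  -- `b`, `y` and `y'` would be three distinct neighbours of `a` in `{c, d}`
  simp only [Set.mem_insert_iff, Set.mem_singleton_iff, Sym2.eq_iff] at hb hy_mem hy'_mem hy hy'
  grind

lemma MinTwoEdgeConnected.of_forall_adj (hG : TwoEdgeConnected G)
    (h : ∀ a b, G.Adj a b →
      ∃ c d, G.neighborSet a ⊆ {c, d} ∨ G.neighborSet b ⊆ {c, d}) :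
    MinTwoEdgeConnected G := by
  refine ⟨hG, fun e he => ?_⟩
  induction e using Sym2.ind with
  | _ a b =>
  obtain ⟨c, d, had | hbd⟩ := h a b he
  · exact not_twoEdgeConnected_deleteEdges_of_neighborSet_subset he had
  · rw [Sym2.eq_swap]
    exact not_twoEdgeConnected_deleteEdges_of_neighborSet_subset he.symm hbd

end EdgeConnectivity

section CompleteBipartite
variable {β : Type}

lemma SimpleGraph.completeBipartiteGraph_edgeSet {α : Type} :
    (completeBipartiteGraph α β).edgeSet =
      Set.range fun p : α × β => s(.inl p.1, .inr p.2) := by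
  ext e
  constructor
  · induction e using Sym2.ind with
    | _ x y =>
    rcases x with a | a <;> rcases y with b | b <;> simp [Sym2.eq_swap]
  · rintro ⟨p, rfl⟩
    simp

lemma SimpleGraph.ncard_edgeSet_completeBipartiteGraph {α : Type} :
    (completeBipartiteGraph α β).edgeSet.ncard = Nat.card α * Nat.card β := by
  rw [completeBipartiteGraph_edgeSet, Set.ncard_range_of_injective, Nat.card_prod]
  rintro ⟨a, b⟩ ⟨a', b'⟩ h
  simpa using h

lemma exists_closed_trail_completeBipartiteGraph_fin_two [Nontrivial β] (x : Fin 2 ⊕ β) :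
    ∃ c : (completeBipartiteGraph (Fin 2) β).Walk (.inl 0) (.inl 0),
      c.IsTrail ∧ x ∈ c.support := by
  have square {b b' : β} (hb : b ≠ b') :
      ∃ c : (completeBipartiteGraph (Fin 2) β).Walk (.inl 0) (.inl 0), c.IsTrail ∧
        ∀ y ∈ [.inr b, .inl 1, .inr b'], y ∈ c.support := by
    refine ⟨.cons (v := .inr b) (by simp) <| .cons (v := .inl 1) (by simp) <|
      .cons (v := .inr b') (by simp) <| .cons (by simp) .nil, ?_, ?_⟩
    · simp [Walk.isTrail_def, hb]
    · simp
  rcases x with a | b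
  · obtain ⟨b, b', hb⟩ := exists_pair_ne β
    obtain ⟨c, hc, hsupp⟩ := square hb
    refine ⟨c, hc, ?_⟩
    fin_cases a
    · exact c.start_mem_support
    · exact hsupp _ (by simp)
  · obtain ⟨b', hb'⟩ := exists_ne b
    exact (square hb'.symm).imp fun c ⟨hc, h⟩ => ⟨hc, h _ (by simp)⟩

lemma minTwoEdgeConnected_completeBipartiteGraph_fin_two [Nontrivial β] :
    MinTwoEdgeConnected (completeBipartiteGraph (Fin 2) β) := by
  refine .of_forall_adj
    (.of_isEdgeConnected_two ⟨s(.inl 0, .inr (Classical.arbitrary β)), by simp⟩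
    (isEdgeConnected_two_of_forall_exists_closed_trail _
      exists_closed_trail_completeBipartiteGraph_fin_two)) ?_
  have hnbr (b : β) :
      (completeBipartiteGraph (Fin 2) β).neighborSet (.inr b) ⊆ {.inl 0, .inl 1} := by
    rintro (a | b') h <;> simp at h ⊢
    fin_cases a <;> simp
  rintro (a | b) (a' | b') h
  · simp at h
  · exact ⟨_, _, .inr (hnbr b')⟩
  · exact ⟨_, _, .inl (hnbr b)⟩
  · simp at h

lemma sqrt_two_mul_sub_two_lt_specRad_completeBipartiteGraph {t : ℕ} (ht : 2 ≤ t) :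
    Real.sqrt (2 * t - 2) < specRad (completeBipartiteGraph (Fin 2) (Fin t)) := by
  set r := Real.sqrt (2 * t - 2)
  have ht' : (2 : ℝ) ≤ t := by exact_mod_cast ht
  have hr : r ^ 2 = 2 * t - 2 := Real.sq_sqrt (by linarith)
  have hr0 : 0 < r := Real.sqrt_pos.mpr (by linarith)
  have hAx : ∀ v, (adjMat (completeBipartiteGraph (Fin 2) (Fin t)) *ᵥ
      Sum.elim (fun _ => (t : ℝ)) (fun _ => r)) v =
        Sum.elim (fun _ => t * r) (fun _ => 2 * t) v := by
    rintro (a | b) <;> simp [adjMat_mulVec_apply, Fintype.sum_sum_type]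
  refine lt_specRad_of_le_mulVec _ (x := Sum.elim (fun _ => (t : ℝ)) (fun _ => r)) ?_ ?_
    ⟨.inr ⟨0, by omega⟩, ?_⟩
  · rintro (a | b) <;> simp [hr0.le]
  · rintro (a | b) <;> simp only [hAx, Sum.elim_inl, Sum.elim_inr] <;> nlinarith
  · simp only [hAx, Sum.elim_inr]
    exact ⟨hr0, by nlinarith⟩

end CompleteBipartite

section SubdividedCompleteBipartite
variable {t : ℕ}

@[simp] lemma SK2_adj_inl_inl {a b : Fin 3} :
    (SK2 t).Adj (.inl a) (.inl b) ↔ a = 0 ∧ b = 2 ∨ a = 2 ∧ b = 0 := by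
  simp only [SK2, fromRel_adj]
  aesop

@[simp] lemma SK2_adj_inl_inr {a : Fin 3} {i : Fin t} :
    (SK2 t).Adj (.inl a) (.inr i) ↔ a = 1 ∨ a = 0 ∧ i.val ≠ 0 ∨ a = 2 ∧ i.val = 0 := by
  simp only [SK2, fromRel_adj]
  aesop

@[simp] lemma SK2_adj_inr_inl {a : Fin 3} {i : Fin t} :
    (SK2 t).Adj (.inr i) (.inl a) ↔ a = 1 ∨ a = 0 ∧ i.val ≠ 0 ∨ a = 2 ∧ i.val = 0 := by
  rw [adj_comm, SK2_adj_inl_inr]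

@[simp] lemma SK2_not_adj_inr_inr {i j : Fin t} : ¬ (SK2 t).Adj (.inr i) (.inr j) := by
  simp [SK2]

lemma SK2_edgeSet : (SK2 t).edgeSet = insert s(.inl 0, .inl 2) (Set.range fun p : Fin 2 × Fin t =>
    s(.inl (if p.1 = 0 then 1 else if p.2.val = 0 then 2 else 0), .inr p.2)) := by
  ext e
  constructor
  · induction e using Sym2.ind with
    | _ x y =>
    simp only [mem_edgeSet, Set.mem_insert_iff, Set.mem_range, Prod.exists]
    rcases x with a | i <;> rcases y with b | j <;> simp <;> grind
  · rintro (rfl | ⟨⟨a, i⟩, rfl⟩)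
    · simp
    · fin_cases a <;> simp; split_ifs <;> simp_all

lemma SK2_ncard_edgeSet : (SK2 t).edgeSet.ncard = 2 * t + 1 := by
  rw [SK2_edgeSet, Set.ncard_insert_of_notMem, Set.ncard_range_of_injective]
  · simp [Nat.card_eq_fintype_card]
  · rintro ⟨a, i⟩ ⟨b, j⟩ h
    simp only [Sym2.eq_iff, Sum.inl.injEq, Sum.inr.injEq, reduceCtorEq, and_false,
      or_false] at h
    obtain ⟨ha, rfl⟩ := h
    fin_cases a <;> fin_cases b <;> simp at ha ⊢ <;> split_ifs at ha <;> simp at ha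
  · simp

lemma SK2_exists_closed_trail (n : ℕ) (x : Fin 3 ⊕ Fin (n + 2)) :
    ∃ c : (SK2 (n + 2)).Walk (.inl 0) (.inl 0), c.IsTrail ∧ x ∈ c.support := by
  have pentagon (j : Fin (n + 1)) : ∃ c : (SK2 (n + 2)).Walk (.inl 0) (.inl 0), c.IsTrail ∧
      ∀ y ∈ [.inl 2, .inr 0, .inl 1, .inr j.succ], y ∈ c.support := by
    refine ⟨.cons (v := .inl 2) (by simp) <| .cons (v := .inr 0) (by simp) <|
      .cons (v := .inl 1) (by simp) <| .cons (v := .inr j.succ) (by simp) <|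
      .cons (by simp) .nil, ?_, ?_⟩
    · simp [Walk.isTrail_def, (Fin.succ_ne_zero j).symm]
    · simp
  rcases x with a | i
  · obtain ⟨c, hc, hsupp⟩ := pentagon 0
    refine ⟨c, hc, ?_⟩
    fin_cases a
    · exact c.start_mem_support
    all_goals exact hsupp _ (by simp)
  · cases i using Fin.cases with
    | zero => exact (pentagon 0).imp fun c ⟨hc, h⟩ => ⟨hc, h _ (by simp)⟩
    | succ j => exact (pentagon j).imp fun c ⟨hc, h⟩ => ⟨hc, h _ (by simp)⟩

lemma SK2_minTwoEdgeConnected (n : ℕ) : MinTwoEdgeConnected (SK2 (n + 2)) := by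
  refine .of_forall_adj (.of_isEdgeConnected_two ⟨s(.inl 0, .inl 2), by simp⟩
    (isEdgeConnected_two_of_forall_exists_closed_trail _ (SK2_exists_closed_trail n))) ?_
  have hw : (SK2 (n + 2)).neighborSet (.inl 2) ⊆ {.inl 0, .inr 0} := by
    rintro (a | i) h <;> simp at h ⊢ <;> grind
  have hz (i : Fin (n + 2)) : ∃ c d, (SK2 (n + 2)).neighborSet (.inr i) ⊆ {c, d} :=
    ⟨.inl 1, .inl (if i.val = 0 then 2 else 0), by
      rintro (a | j) h <;> simp at h ⊢; grind⟩
  rintro (a | i) (b | j) h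
  · simp only [SK2_adj_inl_inl] at h
    rcases h with ⟨rfl, rfl⟩ | ⟨rfl, rfl⟩
    exacts [⟨_, _, .inr hw⟩, ⟨_, _, .inl hw⟩]
  · obtain ⟨c, d, h⟩ := hz j
    exact ⟨c, d, .inr h⟩
  · obtain ⟨c, d, h⟩ := hz i
    exact ⟨c, d, .inl h⟩
  · simp at h

lemma sqrt_lt_specRad_SK2 (n : ℕ) : Real.sqrt (2 * n + 3) < specRad (SK2 (n + 2)) := by
  set r := Real.sqrt (2 * n + 3)
  have hr : r ^ 2 = 2 * n + 3 := Real.sq_sqrt (by positivity)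
  have hr1 : 1 < r := by nlinarith [Real.sqrt_nonneg (2 * n + 3 : ℝ)]
  -- `(A x) v = r * x v` except at `inl 0` and `inl 1`, where it is larger by one
  set x : Fin 3 ⊕ Fin (n + 2) → ℝ :=
    Sum.elim ![r * (r - 1), r * (r - 1), r] (Fin.cons r fun _ => 2 * (r - 1)) with hx
  have hAx : ∀ v, (adjMat (SK2 (n + 2)) *ᵥ x) v = Sum.elim
      ![r + (n + 1) * (2 * (r - 1)), r + (n + 1) * (2 * (r - 1)), r * (r - 1) + r]
      (Fin.cons (r * (r - 1) + r) fun _ => r * (r - 1) + r * (r - 1)) v := by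
    rintro (a | i)
    · fin_cases a <;> simp [adjMat_mulVec_apply, Fintype.sum_sum_type, Fin.sum_univ_succ, hx]
    · cases i using Fin.cases <;>
        simp [adjMat_mulVec_apply, Fintype.sum_sum_type, Fin.sum_univ_succ, hx]
  refine lt_specRad_of_le_mulVec _ (x := x) ?_ ?_ ⟨.inl 0, ?_⟩
  · rintro (a | i)
    · fin_cases a <;> simp [hx] <;> nlinarith
    · cases i using Fin.cases <;> simp [hx] <;> nlinarith
  · rintro (a | i)
    · fin_cases a <;> rw [hAx] <;> simp [hx] <;> nlinarith
    · cases i using Fin.cases <;> rw [hAx] <;> simp [hx] <;> nlinarith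
  · rw [hAx]
    simp [hx]
    constructor <;> nlinarith

end SubdividedCompleteBipartite

theorem stmt10_general {V : Type} [Fintype V] [DecidableEq V] (G : SimpleGraph V) (m : ℕ) (hm : 6 ≤ m)
    (hmax : ∀ (W : Type) [Fintype W] [DecidableEq W] (H : SimpleGraph W),
      MinTwoEdgeConnected H → H.edgeSet.ncard = m → specRad H ≤ specRad G) :
    Real.sqrt ((m : ℝ) - 2) < specRad G := by
  obtain ⟨t, rfl | rfl⟩ := Nat.even_or_odd' m
  · have ht : 2 ≤ t := by omega
    have : Nontrivial (Fin t) := Fin.nontrivial_iff_two_le.mpr ht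
    calc Real.sqrt (((2 * t : ℕ) : ℝ) - 2) = Real.sqrt (2 * t - 2) := by push_cast; rfl
      _ < specRad (completeBipartiteGraph (Fin 2) (Fin t)) :=
        sqrt_two_mul_sub_two_lt_specRad_completeBipartiteGraph ht
      _ ≤ specRad G := hmax _ _ minTwoEdgeConnected_completeBipartiteGraph_fin_two
        (by simp [ncard_edgeSet_completeBipartiteGraph])
  · obtain ⟨n, rfl⟩ : ∃ n, t = n + 2 := ⟨t - 2, by omega⟩
    calc Real.sqrt (((2 * (n + 2) + 1 : ℕ) : ℝ) - 2) = Real.sqrt (2 * n + 3) := by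
          push_cast; ring_nf
      _ < specRad (SK2 (n + 2)) := sqrt_lt_specRad_SK2 n
      _ ≤ specRad G := hmax _ _ (SK2_minTwoEdgeConnected n) SK2_ncard_edgeSet

theorem stmt10 {V : Type} [Fintype V] [DecidableEq V] (G : SimpleGraph V) (m : ℕ) (hm : 6 ≤ m)
    (hG : MinTwoEdgeConnected G) (hGm : G.edgeSet.ncard = m)
    (hmax : ∀ (W : Type) [Fintype W] [DecidableEq W] (H : SimpleGraph W),
      MinTwoEdgeConnected H → H.edgeSet.ncard = m → specRad H ≤ specRad G) :
    Real.sqrt ((m : ℝ) - 2) < specRad G :=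
  stmt10_general G m hm hmax
end
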